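/- Let $R = \mathbb{Z}[u,v,w,x]/(r_{15}, r_{20}, r_{24}, r_{30})$, where $r_{15} = u^{15} - 2x$, $r_{20} = 9u^{20} + 45u^{14}v + 12u^{10}w + 60u^8v^2 + 30u^4vw + 10u^2v^3 + 3w^2$, $r_{24} = 11u^{24} + 60u^{18}v + 21u^{14}w + 105u^{12}v^2 + 60u^8vw + 60u^6v^3 + 9u^4w^2 + 30u^2v^2w + 5v^4$, and $r_{30} = -9x^2 - 12u^9vx - 6u^5wx + 9u^{14}vw - 10u^{12}v^3 - 3u^{10}w^2 + 30u^8v^2w - 35u^6v^4 + 6u^4vw^2 - 10u^2v^3w - 4v^5 - 2w^3$. Then $R/(u) \cong \mathbb{Z}[z_{12},z_{20},z_{30}]/(2z_{30},\, 3z_{20}^2,\, 5z_{12}^4,\, z_{12}^5 + z_{20}^3 + z_{30}^2)$ as rings, via $v \mapsto z_{12}$, $w \mapsto z_{20}$, $x \mapsto z_{30}$. -/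

import Mathlib

open MvPolynomial

noncomputable section

/-- Variables of `ℤ[u,v,w,x]`: `u = X 0`, `v = X 1`, `w = X 2`, `x = X 3`. -/
def U : MvPolynomial (Fin 4) ℤ := X 0
def V : MvPolynomial (Fin 4) ℤ := X 1
def W : MvPolynomial (Fin 4) ℤ := X 2
def Xx : MvPolynomial (Fin 4) ℤ := X 3

def r15 : MvPolynomial (Fin 4) ℤ := U ^ 15 - 2 * Xx

def r20 : MvPolynomial (Fin 4) ℤ :=
  9 * U ^ 20 + 45 * U ^ 14 * V + 12 * U ^ 10 * W + 60 * U ^ 8 * V ^ 2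
    + 30 * U ^ 4 * V * W + 10 * U ^ 2 * V ^ 3 + 3 * W ^ 2

def r24 : MvPolynomial (Fin 4) ℤ :=
  11 * U ^ 24 + 60 * U ^ 18 * V + 21 * U ^ 14 * W + 105 * U ^ 12 * V ^ 2
    + 60 * U ^ 8 * V * W + 60 * U ^ 6 * V ^ 3 + 9 * U ^ 4 * W ^ 2
    + 30 * U ^ 2 * V ^ 2 * W + 5 * V ^ 4

def r30 : MvPolynomial (Fin 4) ℤ :=
  -9 * Xx ^ 2 - 12 * U ^ 9 * V * Xx - 6 * U ^ 5 * W * Xx + 9 * U ^ 14 * V * W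
    - 10 * U ^ 12 * V ^ 3 - 3 * U ^ 10 * W ^ 2 + 30 * U ^ 8 * V ^ 2 * W
    - 35 * U ^ 6 * V ^ 4 + 6 * U ^ 4 * V * W ^ 2 - 10 * U ^ 2 * V ^ 3 * W
    - 4 * V ^ 5 - 2 * W ^ 3

/-- `R = H^*(E₈/T¹·E₇; ℤ) = ℤ[u,v,w,x]/(r₁₅, r₂₀, r₂₄, r₃₀)`. -/
def I14 : Ideal (MvPolynomial (Fin 4) ℤ) := Ideal.span {r15, r20, r24, r30}

abbrev R14 := MvPolynomial (Fin 4) ℤ ⧸ I14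

def π14 : MvPolynomial (Fin 4) ℤ →+* R14 := Ideal.Quotient.mk I14

/-- The further quotient `R/(u)`. -/
def Iu : Ideal R14 := Ideal.span {π14 U}

abbrev R14u := R14 ⧸ Iu

def π14u : R14 →+* R14u := Ideal.Quotient.mk Iu

/-- The target ring `ℤ[z₁₂,z₂₀,z₃₀]/(2z₃₀, 3z₂₀², 5z₁₂⁴, z₁₂⁵+z₂₀³+z₃₀²)`
(`z₁₂ = X 0`, `z₂₀ = X 1`, `z₃₀ = X 2`). -/
def IZ : Ideal (MvPolynomial (Fin 3) ℤ) :=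
  Ideal.span {2 * X (2 : Fin 3), 3 * (X (1 : Fin 3)) ^ 2, 5 * (X (0 : Fin 3)) ^ 4,
    (X (0 : Fin 3)) ^ 5 + (X (1 : Fin 3)) ^ 3 + (X (2 : Fin 3)) ^ 2}

abbrev Z14 := MvPolynomial (Fin 3) ℤ ⧸ IZ

def πZ : MvPolynomial (Fin 3) ℤ →+* Z14 := Ideal.Quotient.mk IZ

/-! Setting `u = 0` turns `r₁₅, r₂₀, r₂₄` into `-2x, 3w², 5v⁴` and `r₃₀` into
`-9x² - 4v⁵ - 2w³`, which is `v⁵ + w³ + x²` modulo the first three. So both presentations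
impose the same relations on `(v, w, x)`, and the evaluations `u ↦ 0, (v, w, x) ↦ (z₁₂, z₂₀, z₃₀)`
and back descend to mutually inverse maps of the quotients. -/

lemma reduced_r30_eq {S : Type*} [CommRing S] {v w x : S} (hx : 2 * x = 0) (hw : 3 * w ^ 2 = 0)
    (hv : 5 * v ^ 4 = 0) : -9 * x ^ 2 - 4 * v ^ 5 - 2 * w ^ 3 = v ^ 5 + w ^ 3 + x ^ 2 := by
  linear_combination (-5 * x) * hx - w * hw - v * hv

section ReductionModU

variable {S : Type*} [CommRing S] [Algebra ℤ S] (v w x : S)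

lemma aeval_zero_r15 : aeval ![0, v, w, x] r15 = -(2 * x) := by
  simp [r15, U, Xx]

lemma aeval_zero_r20 : aeval ![0, v, w, x] r20 = 3 * w ^ 2 := by
  simp [r20, U, V, W]

lemma aeval_zero_r24 : aeval ![0, v, w, x] r24 = 5 * v ^ 4 := by
  simp [r24, U, V, W]

lemma aeval_zero_r30 : aeval ![0, v, w, x] r30 = -9 * x ^ 2 - 4 * v ^ 5 - 2 * w ^ 3 := by
  simp [r30, U, V, W, Xx]

lemma I14_le_ker_aeval_zero_iff :
    I14 ≤ RingHom.ker (aeval ![0, v, w, x]) ↔ IZ ≤ RingHom.ker (aeval ![v, w, x]) := by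
  simp only [I14, IZ, Ideal.span_le, Set.insert_subset_iff, Set.singleton_subset_iff,
    SetLike.mem_coe, RingHom.mem_ker, aeval_zero_r15, aeval_zero_r20, aeval_zero_r24,
    aeval_zero_r30, neg_eq_zero, map_add, map_mul, map_pow, map_ofNat, aeval_X,
    Matrix.cons_val]
  refine and_congr_right fun hx ↦ and_congr_right fun hw ↦ and_congr_right fun hv ↦ ?_
  rw [reduced_r30_eq hx hw hv]

end ReductionModU

lemma aeval_πZ_X : aeval ![πZ (X 0), πZ (X 1), πZ (X 2)] = Ideal.Quotient.mkₐ ℤ IZ := by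
  refine algHom_ext fun i ↦ ?_
  fin_cases i <;> simp [πZ]

def liftR14 : R14 →ₐ[ℤ] Z14 :=
  Ideal.Quotient.liftₐ I14 (aeval ![0, πZ (X 0), πZ (X 1), πZ (X 2)]) fun _ ha ↦
    (I14_le_ker_aeval_zero_iff (πZ (X 0)) (πZ (X 1)) (πZ (X 2))).2 (by
      rw [aeval_πZ_X]; exact fun _ hp ↦ Ideal.Quotient.eq_zero_iff_mem.2 hp) ha

lemma liftR14_π14 (p) : liftR14 (π14 p) = aeval ![0, πZ (X 0), πZ (X 1), πZ (X 2)] p := rfl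

lemma Iu_le_ker_liftR14 : Iu ≤ RingHom.ker liftR14 := by
  rw [Iu, Ideal.span_le, Set.singleton_subset_iff, SetLike.mem_coe, RingHom.mem_ker, liftR14_π14]
  simp [U]

def toZ14 : R14u →ₐ[ℤ] Z14 :=
  Ideal.Quotient.liftₐ Iu liftR14 fun _ ha ↦ Iu_le_ker_liftR14 ha

def ρ : MvPolynomial (Fin 4) ℤ →ₐ[ℤ] R14u :=
  (Ideal.Quotient.mkₐ ℤ Iu).comp (Ideal.Quotient.mkₐ ℤ I14)

lemma ρ_U : ρ U = 0 :=
  Ideal.Quotient.eq_zero_iff_mem.2 (Ideal.subset_span rfl)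

lemma I14_le_ker_ρ : I14 ≤ RingHom.ker ρ := fun _ hp ↦ by
  simp [ρ, Ideal.Quotient.eq_zero_iff_mem.2 hp]

lemma aeval_ρ_X : aeval ![0, ρ V, ρ W, ρ Xx] = ρ := by
  refine algHom_ext fun i ↦ ?_
  fin_cases i
  · simpa [U] using ρ_U.symm
  all_goals simp [V, W, Xx]

def ofZ14 : Z14 →ₐ[ℤ] R14u :=
  Ideal.Quotient.liftₐ IZ (aeval ![ρ V, ρ W, ρ Xx]) fun _ ha ↦
    (I14_le_ker_aeval_zero_iff (ρ V) (ρ W) (ρ Xx)).1 (by rw [aeval_ρ_X]; exact I14_le_ker_ρ) ha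

lemma toZ14_ρ_X (i) : toZ14 (ρ (X i)) = ![0, πZ (X 0), πZ (X 1), πZ (X 2)] i :=
  aeval_X _ i

lemma ofZ14_πZ_X (i) : ofZ14 (πZ (X i)) = ![ρ V, ρ W, ρ Xx] i :=
  aeval_X _ i

lemma toZ14_comp_ofZ14 : toZ14.comp ofZ14 = AlgHom.id ℤ Z14 := by
  refine Ideal.Quotient.algHom_ext _ (algHom_ext fun i ↦ ?_)
  change toZ14 (ofZ14 (πZ (X i))) = πZ (X i)
  rw [ofZ14_πZ_X]
  fin_cases i
  exacts [toZ14_ρ_X 1, toZ14_ρ_X 2, toZ14_ρ_X 3]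

lemma ofZ14_comp_toZ14 : ofZ14.comp toZ14 = AlgHom.id ℤ R14u := by
  refine Ideal.Quotient.algHom_ext _ (Ideal.Quotient.algHom_ext _ (algHom_ext fun i ↦ ?_))
  change ofZ14 (toZ14 (ρ (X i))) = ρ (X i)
  rw [toZ14_ρ_X]
  fin_cases i
  exacts [(map_zero ofZ14).trans ρ_U.symm, ofZ14_πZ_X 0, ofZ14_πZ_X 1, ofZ14_πZ_X 2]

/-- `R/(u) ≅ ℤ[z₁₂,z₂₀,z₃₀]/(2z₃₀, 3z₂₀², 5z₁₂⁴, z₁₂⁵+z₂₀³+z₃₀²)` via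
`v ↦ z₁₂`, `w ↦ z₂₀`, `x ↦ z₃₀`. -/
theorem stmt14 :
    ∃ e : R14u ≃+* Z14,
      e (π14u (π14 V)) = πZ (X (0 : Fin 3)) ∧
      e (π14u (π14 W)) = πZ (X (1 : Fin 3)) ∧
      e (π14u (π14 Xx)) = πZ (X (2 : Fin 3)) :=
  ⟨(AlgEquiv.ofAlgHom toZ14 ofZ14 toZ14_comp_ofZ14 ofZ14_comp_toZ14).toRingEquiv,
    toZ14_ρ_X 1, toZ14_ρ_X 2, toZ14_ρ_X 3⟩

end
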